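/- arXiv:2511.19075 — 5 statements merged into one kernel-verified Lean document; each statement's English description precedes it below -/
import Mathlib

section
/- Let X and Y be compact metric spaces, α a nonzero finite positive Radon measure on X, β a nonzero finite positive Radon measure on Y, and let φ₁, φ₂ be entropy functions. Let c : X×Y → ℝ be continuous with c(x,y) ≥ L for all (x,y) and some L ∈ ℝ. Then for every π ∈ M⁺(X×Y), ∫_{X×Y} c dπ + D_{φ₁}(π₁‖α) + D_{φ₂}(π₂‖β) ≥ L·m(π) + m(α)·φ₁(m(π)/m(α)) + m(β)·φ₂(m(π)/m(β)). In particular, if φ₁ and φ₂ are superlinear, the left-hand side tends to +∞ as m(π) → ∞, uniformly over such costs c bounded below by L. -/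
open MeasureTheory Filter Set Pointwise
open scoped ENNReal NNReal

noncomputable section

/-- The recession slope `φ'_∞ = lim_{x→∞} φ(x)/x` of an entropy function. -/
def phiRecession (φ : ℝ → ℝ≥0∞) : ℝ≥0∞ :=
  Filter.limsup (fun x : ℝ => φ x / ENNReal.ofReal x) Filter.atTop

/-- An entropy function: convex, lower semicontinuous `φ : [0,∞) → [0,∞]` with `φ(1) = 0`. -/
def IsEntropyFunction (φ : ℝ → ℝ≥0∞) : Prop :=
  φ 1 = 0 ∧ LowerSemicontinuous φ ∧
    ∀ x ∈ Set.Ici (0 : ℝ), ∀ y ∈ Set.Ici (0 : ℝ), ∀ t ∈ Set.Icc (0 : ℝ) 1,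
      φ (t * x + (1 - t) * y) ≤ ENNReal.ofReal t * φ x + ENNReal.ofReal (1 - t) * φ y

/-- The φ-divergence `D_φ(μ‖ν) = ∫ φ(dμ/dν) dν + φ'_∞ · μ^⊥(univ)`. -/
def phiDiv {Z : Type*} [MeasurableSpace Z] (φ : ℝ → ℝ≥0∞) (μ ν : Measure Z) : ℝ≥0∞ :=
  (∫⁻ z, φ ((μ.rnDeriv ν z).toReal) ∂ν) + phiRecession φ * μ.singularPart ν Set.univ

/-- The UOT objective `∫ c dπ + D_{φ₁}(π₁‖α) + D_{φ₂}(π₂‖β)` for a fixed cost `c`. -/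
def UOTobj {X Y : Type*} [MeasurableSpace X] [MeasurableSpace Y]
    (α : Measure X) (β : Measure Y) (φ₁ φ₂ : ℝ → ℝ≥0∞)
    (c : X × Y → ℝ) (π : Measure (X × Y)) : EReal :=
  ((∫ z, c z ∂π : ℝ) : EReal)
    + ((phiDiv φ₁ (π.map Prod.fst) α : ℝ≥0∞) : EReal)
    + ((phiDiv φ₂ (π.map Prod.snd) β : ℝ≥0∞) : EReal)

/-!
The cost term is at least `L·m(π)`, and both marginals of `π` have mass `m(π)`. For each
divergence, `m(ν)·φ(m(μ)/m(ν)) ≤ D_φ(μ‖ν)` is Jensen's inequality: integrating an affine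
minorant `p + q x` of `φ` against `ν` bounds the absolutely continuous part, and its slope `q` is
at most `φ'_∞`, which pays for the singular part. A convex lower semicontinuous `φ` is the
supremum of such minorants, by Hahn–Banach applied to its epigraph.

If `φ₁` is superlinear, convexity along chords through `φ₁(1) = 0` gives `φ₁(x) ≥ M (x - 1)` for
all large `x`, for any `M`; with `M > -L` this beats the linear term `L·m(π)`.
-/

open Topology

lemma MeasureTheory.ofReal_integral_le_lintegral_ofReal {Z : Type*} [MeasurableSpace Z]
    {μ : Measure Z} {f : Z → ℝ} (hf : Integrable f μ) :
    ENNReal.ofReal (∫ z, f z ∂μ) ≤ ∫⁻ z, ENNReal.ofReal (f z) ∂μ :=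
  calc ENNReal.ofReal (∫ z, f z ∂μ) ≤ ENNReal.ofReal (∫ z, max (f z) 0 ∂μ) :=
        ENNReal.ofReal_le_ofReal (integral_mono hf hf.pos_part fun z => le_max_left _ _)
    _ = ∫⁻ z, ENNReal.ofReal (max (f z) 0) ∂μ :=
        ofReal_integral_eq_lintegral_ofReal hf.pos_part (ae_of_all _ fun z => le_max_right _ _)
    _ = ∫⁻ z, ENNReal.ofReal (f z) ∂μ := by simp [ENNReal.ofReal_max]

lemma ofReal_le_phiRecession {φ : ℝ → ℝ≥0∞} {p q : ℝ}
    (h : ∀ x, 0 ≤ x → ENNReal.ofReal (p + q * x) ≤ φ x) :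
    ENNReal.ofReal q ≤ phiRecession φ := by
  have htend : Tendsto (fun x : ℝ => ENNReal.ofReal (p / x + q)) atTop (𝓝 (ENNReal.ofReal q)) :=
    ENNReal.tendsto_ofReal (by simpa using (tendsto_const_nhds.div_atTop tendsto_id).add_const q)
  rw [phiRecession, ← htend.limsup_eq]
  refine limsup_le_limsup ?_
  filter_upwards [eventually_gt_atTop 0] with x hx
  calc ENNReal.ofReal (p / x + q) = ENNReal.ofReal (p + q * x) / ENNReal.ofReal x := by
        rw [← ENNReal.ofReal_div_of_pos hx]
        congr 1
        field_simp
    _ ≤ φ x / ENNReal.ofReal x := ENNReal.div_le_div_right (h x hx.le) _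

lemma ofReal_add_mul_le_phiDiv {Z : Type*} [MeasurableSpace Z] {φ : ℝ → ℝ≥0∞}
    {μ ν : Measure Z} [IsFiniteMeasure μ] [IsFiniteMeasure ν] {p q : ℝ}
    (h : ∀ x, 0 ≤ x → ENNReal.ofReal (p + q * x) ≤ φ x) :
    ENNReal.ofReal (p * (ν univ).toReal + q * (μ univ).toReal) ≤ phiDiv φ μ ν := by
  set g : Z → ℝ := fun z => (μ.rnDeriv ν z).toReal
  have hg : Integrable (fun z => p + q * g z) ν :=
    (integrable_const p).add (Measure.integrable_toReal_rnDeriv.const_mul q)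
  have hint : ∫ z, p + q * g z ∂ν
      = p * (ν univ).toReal + q * ((μ univ).toReal - (μ.singularPart ν univ).toReal) := by
    rw [integral_add (integrable_const p) (Measure.integrable_toReal_rnDeriv.const_mul q),
      integral_const, integral_const_mul, Measure.integral_toReal_rnDeriv', smul_eq_mul]
    simp only [measureReal_def]
    ring
  calc ENNReal.ofReal (p * (ν univ).toReal + q * (μ univ).toReal)
      = ENNReal.ofReal (∫ z, p + q * g z ∂ν + q * (μ.singularPart ν univ).toReal) := by
        rw [hint]
        ring_nf
    _ ≤ ENNReal.ofReal (∫ z, p + q * g z ∂ν)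
          + ENNReal.ofReal q * μ.singularPart ν univ := by
        rw [← ENNReal.ofReal_toReal (measure_ne_top (μ.singularPart ν) univ),
          ← ENNReal.ofReal_mul' ENNReal.toReal_nonneg, ENNReal.toReal_ofReal ENNReal.toReal_nonneg]
        exact ENNReal.ofReal_add_le
    _ ≤ (∫⁻ z, φ (g z) ∂ν) + phiRecession φ * μ.singularPart ν univ := by
        gcongr
        · exact (ofReal_integral_le_lintegral_ofReal hg).trans
            (lintegral_mono fun z => h _ ENNReal.toReal_nonneg)
        · exact ofReal_le_phiRecession h

-- Heights are restricted to `0 ≤ t`: since `ENNReal.ofReal` truncates, the set is not convex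
-- otherwise.
def entropyEpigraph (φ : ℝ → ℝ≥0∞) : Set (ℝ × ℝ) :=
  {p | 0 ≤ p.1 ∧ 0 ≤ p.2 ∧ φ p.1 ≤ ENNReal.ofReal p.2}

lemma LowerSemicontinuous.isClosed_entropyEpigraph {φ : ℝ → ℝ≥0∞}
    (hφ : LowerSemicontinuous φ) : IsClosed (entropyEpigraph φ) := by
  have hepi : IsClosed (Prod.map id ENNReal.ofReal ⁻¹' {q : ℝ × ℝ≥0∞ | φ q.1 ≤ q.2}) :=
    hφ.isClosed_epigraph.preimage (continuous_id.prodMap ENNReal.continuous_ofReal)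
  exact (isClosed_le continuous_const continuous_fst).inter
    ((isClosed_le continuous_const continuous_snd).inter hepi)

namespace IsEntropyFunction

variable {φ : ℝ → ℝ≥0∞}

lemma convex_entropyEpigraph (hφ : IsEntropyFunction φ) : Convex ℝ (entropyEpigraph φ) := by
  rintro ⟨x₁, t₁⟩ ⟨hx₁, ht₁, h₁⟩ ⟨x₂, t₂⟩ ⟨hx₂, ht₂, h₂⟩ s₁ s₂ hs₁ hs₂ hs
  obtain rfl : s₂ = 1 - s₁ := by linarith
  refine ⟨by dsimp; positivity, by dsimp; positivity, ?_⟩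
  calc φ (s₁ * x₁ + (1 - s₁) * x₂)
      ≤ ENNReal.ofReal s₁ * φ x₁ + ENNReal.ofReal (1 - s₁) * φ x₂ :=
        hφ.2.2 x₁ hx₁ x₂ hx₂ s₁ ⟨hs₁, by linarith⟩
    _ ≤ ENNReal.ofReal s₁ * ENNReal.ofReal t₁ + ENNReal.ofReal (1 - s₁) * ENNReal.ofReal t₂ := by
        gcongr
    _ = ENNReal.ofReal (s₁ * t₁ + (1 - s₁) * t₂) := by
        rw [← ENNReal.ofReal_mul hs₁, ← ENNReal.ofReal_mul hs₂,
          ← ENNReal.ofReal_add (by positivity) (by positivity)]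

-- Adding a small multiple of the height to a Hahn–Banach separator makes it non-vertical.
lemma exists_separation (hφ : IsEntropyFunction φ) {xb r : ℝ}
    (hr : ENNReal.ofReal r < φ xb) :
    ∃ a b u : ℝ, 0 < b ∧ a * xb + b * r < u ∧
      ∀ p ∈ entropyEpigraph φ, u < a * p.1 + b * p.2 := by
  obtain ⟨f, u, hfu, hsep⟩ := geometric_hahn_banach_point_closed hφ.convex_entropyEpigraph
    hφ.2.1.isClosed_entropyEpigraph (show (xb, r) ∉ _ from fun h => hr.not_ge h.2.2)
  have hf : ∀ p : ℝ × ℝ, f p = p.1 * f (1, 0) + p.2 * f (0, 1) := fun p => by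
    rw [← smul_eq_mul, ← smul_eq_mul, ← f.map_smul, ← f.map_smul, ← f.map_add]
    simp
  have hvert : ∀ t, 0 ≤ t → (1, t) ∈ entropyEpigraph φ := fun t ht =>
    ⟨zero_le_one, ht, by simp [hφ.1]⟩
  have hb : 0 ≤ f (0, 1) := by
    by_contra! hb
    have h0 : u < f (1, 0) := hsep _ (hvert 0 le_rfl)
    have ht : f (1, (f (1, 0) - u) / -f (0, 1)) = u := by
      have := hb.ne
      rw [hf]
      field_simp
      ring
    exact (hsep _ (hvert _ (div_nonneg (by linarith) (by linarith)))).ne' ht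
  set δ := u - f (xb, r)
  have hδ0 : 0 < δ := sub_pos.2 hfu
  refine ⟨f (1, 0), f (0, 1) + δ / (|r| + 1), u, by positivity, ?_, fun p hp => ?_⟩
  · have : δ / (|r| + 1) * r < δ := by
      rw [div_mul_eq_mul_div, div_lt_iff₀ (by positivity)]
      nlinarith [le_abs_self r]
    have := hf (xb, r)
    dsimp only at this
    linarith
  · have := hsep p hp
    rw [hf] at this
    nlinarith [hp.2.1, div_pos hδ0 (show (0 : ℝ) < |r| + 1 by positivity)]

lemma exists_affine_le (hφ : IsEntropyFunction φ) {xb r : ℝ}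
    (hr : ENNReal.ofReal r < φ xb) :
    ∃ p q : ℝ, r < p + q * xb ∧ ∀ x, 0 ≤ x → ENNReal.ofReal (p + q * x) ≤ φ x := by
  obtain ⟨a, b, u, hb, hpt, hsep⟩ := hφ.exists_separation hr
  have hline : ∀ x, u / b + -a / b * x = (u - a * x) / b := fun x => by ring
  refine ⟨u / b, -a / b, ?_, fun x hx => ?_⟩
  · rw [hline, lt_div_iff₀ hb]
    linarith
  · rcases eq_or_ne (φ x) ⊤ with h | h
    · simp [h]
    have := hsep (x, (φ x).toReal) ⟨hx, ENNReal.toReal_nonneg, (ENNReal.ofReal_toReal h).ge⟩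
    rw [← ENNReal.ofReal_toReal h, hline]
    exact ENNReal.ofReal_le_ofReal ((div_le_iff₀ hb).2 (by dsimp at this; linarith))

lemma mul_le_phiDiv (hφ : IsEntropyFunction φ) {Z : Type*} [MeasurableSpace Z]
    (μ ν : Measure Z) [IsFiniteMeasure μ] [IsFiniteMeasure ν] :
    ENNReal.ofReal (ν univ).toReal * φ ((μ univ).toReal / (ν univ).toReal) ≤ phiDiv φ μ ν := by
  set m := (ν univ).toReal
  have hm : 0 ≤ m := ENNReal.toReal_nonneg
  rcases hm.eq_or_lt with hm | hm
  · rw [← hm, ENNReal.ofReal_zero, zero_mul]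
    exact zero_le
  refine ENNReal.mul_le_of_le_div' (ENNReal.le_of_forall_nnreal_lt fun r hr => ?_)
  rw [← ENNReal.ofReal_coe_nnreal] at hr ⊢
  obtain ⟨p, q, hrpq, hpq⟩ := hφ.exists_affine_le hr
  rw [ENNReal.le_div_iff_mul_le (Or.inl (by simpa using hm)) (Or.inl ENNReal.ofReal_ne_top),
    ← ENNReal.ofReal_mul' hm.le]
  refine le_trans (ENNReal.ofReal_le_ofReal ?_) (ofReal_add_mul_le_phiDiv hpq)
  calc (r : ℝ) * m ≤ (p + q * ((μ univ).toReal / m)) * m := by gcongr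
    _ = p * m + q * (μ univ).toReal := by field_simp

lemma ofReal_sub_one_mul_le (hφ : IsEntropyFunction φ) {x y : ℝ} (hy : 1 ≤ y) (hyx : y ≤ x) :
    ENNReal.ofReal (x - 1) * φ y ≤ ENNReal.ofReal (y - 1) * φ x := by
  rcases hy.eq_or_lt with rfl | hy
  · simp [hφ.1]
  have hx : 0 < x - 1 := by linarith
  set t := (y - 1) / (x - 1)
  have hconv := hφ.2.2 x (by simp; linarith) 1 (by simp) t
    ⟨by positivity, (div_le_one hx).2 (by linarith)⟩
  have hty : t * x + (1 - t) * 1 = y := by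
    simp only [t]
    field_simp
    ring
  rw [hty, hφ.1, mul_zero, add_zero] at hconv
  calc ENNReal.ofReal (x - 1) * φ y ≤ ENNReal.ofReal (x - 1) * (ENNReal.ofReal t * φ x) := by
        gcongr
    _ = ENNReal.ofReal (y - 1) * φ x := by
        rw [← mul_assoc, ← ENNReal.ofReal_mul hx.le, mul_div_cancel₀ _ hx.ne']

lemma eventually_ofReal_mul_le (hφ : IsEntropyFunction φ) (hrec : phiRecession φ = ⊤) (M : ℝ) :
    ∀ᶠ x in atTop, ENNReal.ofReal M * ENNReal.ofReal (x - 1) ≤ φ x := by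
  have hM : ENNReal.ofReal M < phiRecession φ :=
    hrec ▸ ENNReal.ofReal_lt_top
  obtain ⟨y, hMy, hy⟩ :=
    ((frequently_lt_of_lt_limsup (by isBoundedDefault) hM).and_eventually
      (eventually_ge_atTop 2)).exists
  have hy0 : ENNReal.ofReal y ≠ 0 := by simp; linarith
  have hy1 : ENNReal.ofReal (y - 1) ≠ 0 := by simp; linarith
  filter_upwards [eventually_ge_atTop y] with x hx
  rw [← ENNReal.mul_le_mul_iff_right hy1 ENNReal.ofReal_ne_top]
  calc ENNReal.ofReal (y - 1) * (ENNReal.ofReal M * ENNReal.ofReal (x - 1))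
      = ENNReal.ofReal (x - 1) * (ENNReal.ofReal M * ENNReal.ofReal (y - 1)) := by ring
    _ ≤ ENNReal.ofReal (x - 1) * (ENNReal.ofReal M * ENNReal.ofReal y) := by
        gcongr
        linarith
    _ ≤ ENNReal.ofReal (x - 1) * φ y := by
        gcongr
        exact ENNReal.mul_le_of_le_div hMy.le
    _ ≤ ENNReal.ofReal (y - 1) * φ x := hφ.ofReal_sub_one_mul_le (by linarith) hx

end IsEntropyFunction

def UOTmassBound {X Y : Type*} [MeasurableSpace X] [MeasurableSpace Y]
    (α : Measure X) (β : Measure Y) (φ₁ φ₂ : ℝ → ℝ≥0∞) (L m : ℝ) : EReal :=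
  ((L * m : ℝ) : EReal)
    + ((ENNReal.ofReal (α Set.univ).toReal * φ₁ (m / (α Set.univ).toReal) : ℝ≥0∞) : EReal)
    + ((ENNReal.ofReal (β Set.univ).toReal * φ₂ (m / (β Set.univ).toReal) : ℝ≥0∞) : EReal)

section UOT

variable {X Y : Type*} [MeasurableSpace X] [MeasurableSpace Y] {α : Measure X} {β : Measure Y}
  {φ₁ φ₂ : ℝ → ℝ≥0∞}

lemma UOTmassBound_le_UOTobj [IsFiniteMeasure α] [IsFiniteMeasure β]
    (hφ₁ : IsEntropyFunction φ₁) (hφ₂ : IsEntropyFunction φ₂) {L : ℝ} {c : X × Y → ℝ}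
    {π : Measure (X × Y)} [IsFiniteMeasure π] (hc : Integrable c π) (hcL : ∀ z, L ≤ c z) :
    UOTmassBound α β φ₁ φ₂ L (π univ).toReal ≤ UOTobj α β φ₁ φ₂ c π := by
  have hL : L * (π univ).toReal ≤ ∫ z, c z ∂π := by
    simpa [mul_comm, measureReal_def] using integral_mono (integrable_const L) hc hcL
  have h₁ := hφ₁.mul_le_phiDiv (π.map Prod.fst) α
  have h₂ := hφ₂.mul_le_phiDiv (π.map Prod.snd) β
  rw [← Measure.fst, Measure.fst_univ] at h₁
  rw [← Measure.snd, Measure.snd_univ] at h₂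
  unfold UOTmassBound UOTobj
  refine add_le_add (add_le_add ?_ ?_) ?_
  · exact EReal.coe_le_coe_iff.2 hL
  · exact EReal.coe_ennreal_le_coe_ennreal_iff.2 h₁
  · exact EReal.coe_ennreal_le_coe_ennreal_iff.2 h₂

lemma exists_le_UOTmassBound [IsFiniteMeasure α] (hα : α ≠ 0) (hφ₁ : IsEntropyFunction φ₁)
    (hrec : phiRecession φ₁ = ⊤) (L A : ℝ) :
    ∃ K, ∀ m, K ≤ m → (A : EReal) ≤ UOTmassBound α β φ₁ φ₂ L m := by
  set mα := (α univ).toReal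
  have hmα : 0 < mα := ENNReal.toReal_pos (by simpa using hα) (measure_ne_top α univ)
  set M := |L| + 1
  obtain ⟨x₀, hx₀⟩ := eventually_atTop.1
    ((hφ₁.eventually_ofReal_mul_le hrec M).and (eventually_ge_atTop 1))
  refine ⟨max (A + M * mα) (x₀ * mα), fun m hm => ?_⟩
  have hx : x₀ ≤ m / mα := (le_div_iff₀ hmα).2 (le_of_max_le_right hm)
  have hm0 : 0 ≤ m := by nlinarith [(hx₀ x₀ le_rfl).2, le_of_max_le_right hm]
  have h₁ : ENNReal.ofReal (M * (m - mα)) ≤ ENNReal.ofReal mα * φ₁ (m / mα) :=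
    calc ENNReal.ofReal (M * (m - mα))
        = ENNReal.ofReal mα * (ENNReal.ofReal M * ENNReal.ofReal (m / mα - 1)) := by
          rw [← ENNReal.ofReal_mul' (by linarith [(hx₀ _ hx).2]), ← ENNReal.ofReal_mul hmα.le]
          congr 1
          field_simp
      _ ≤ ENNReal.ofReal mα * φ₁ (m / mα) := by gcongr; exact (hx₀ _ hx).1
  have hA : A ≤ L * m + M * (m - mα) := by
    nlinarith [neg_abs_le L, le_of_max_le_left hm]
  calc (A : EReal) ≤ ((L * m : ℝ) : EReal) + ((M * (m - mα) : ℝ) : EReal) := by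
        exact_mod_cast hA
    _ ≤ ((L * m : ℝ) : EReal) + ((ENNReal.ofReal (M * (m - mα)) : ℝ≥0∞) : EReal) := by
        rw [EReal.coe_ennreal_ofReal]
        gcongr
        exact le_max_left _ _
    _ ≤ ((L * m : ℝ) : EReal) + ((ENNReal.ofReal mα * φ₁ (m / mα) : ℝ≥0∞) : EReal) := by
        gcongr
        exact EReal.coe_ennreal_le_coe_ennreal_iff.2 h₁
    _ ≤ UOTmassBound α β φ₁ φ₂ L m := le_add_of_nonneg_right (EReal.coe_ennreal_nonneg _)

end UOT

theorem stmt1_general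
    {X Y : Type*} [MetricSpace X] [CompactSpace X] [MeasurableSpace X] [BorelSpace X]
    [MetricSpace Y] [CompactSpace Y] [MeasurableSpace Y] [BorelSpace Y]
    (α : Measure X) (β : Measure Y) [IsFiniteMeasure α] [IsFiniteMeasure β]
    (hα : α ≠ 0)
    (φ₁ φ₂ : ℝ → ℝ≥0∞)
    (hφ₁ : IsEntropyFunction φ₁) (hφ₂ : IsEntropyFunction φ₂)
    (L : ℝ) :
    (∀ (c : X × Y → ℝ), Continuous c → (∀ z, L ≤ c z) →
      ∀ (π : Measure (X × Y)), IsFiniteMeasure π →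
        ((L * (π Set.univ).toReal : ℝ) : EReal)
          + ((ENNReal.ofReal (α Set.univ).toReal
              * φ₁ ((π Set.univ).toReal / (α Set.univ).toReal) : ℝ≥0∞) : EReal)
          + ((ENNReal.ofReal (β Set.univ).toReal
              * φ₂ ((π Set.univ).toReal / (β Set.univ).toReal) : ℝ≥0∞) : EReal)
        ≤ UOTobj α β φ₁ φ₂ c π) ∧
    (phiRecession φ₁ = ⊤ → phiRecession φ₂ = ⊤ →
      ∀ A : ℝ, ∃ K : ℝ, ∀ (π : Measure (X × Y)), IsFiniteMeasure π →
        K ≤ (π Set.univ).toReal →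
        ∀ (c : X × Y → ℝ), Continuous c → (∀ z, L ≤ c z) →
          (A : EReal) ≤ UOTobj α β φ₁ φ₂ c π) := by
  have hbound : ∀ c : X × Y → ℝ, Continuous c → (∀ z, L ≤ c z) →
      ∀ (π : Measure (X × Y)), IsFiniteMeasure π →
        UOTmassBound α β φ₁ φ₂ L (π univ).toReal ≤ UOTobj α β φ₁ φ₂ c π :=
    fun c hc hcL π _ => UOTmassBound_le_UOTobj hφ₁ hφ₂
      ((BoundedContinuousFunction.mkOfCompact ⟨c, hc⟩).integrable π) hcL
  refine ⟨hbound, fun hrec₁ _ A => ?_⟩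
  obtain ⟨K, hK⟩ := exists_le_UOTmassBound (β := β) (φ₂ := φ₂) hα hφ₁ hrec₁ L A
  exact ⟨K, fun π hπ hπK c hc hcL => (hK _ hπK).trans (hbound c hc hcL π hπ)⟩

/-- **Mass–coercivity lower bound.** For compact metric spaces `X`, `Y`, nonzero finite
measures `α`, `β`, entropy functions `φ₁, φ₂` and a continuous cost `c ≥ L`, every finite
positive measure `π` on `X×Y` satisfies
`∫ c dπ + D_{φ₁}(π₁‖α) + D_{φ₂}(π₂‖β) ≥ L·m(π) + m(α)·φ₁(m(π)/m(α)) + m(β)·φ₂(m(π)/m(β))`;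
and if `φ₁, φ₂` are superlinear, the objective tends to `+∞` as `m(π) → ∞`, uniformly over
continuous costs `c` bounded below by `L`. -/
theorem stmt1
    {X Y : Type*} [MetricSpace X] [CompactSpace X] [MeasurableSpace X] [BorelSpace X]
    [MetricSpace Y] [CompactSpace Y] [MeasurableSpace Y] [BorelSpace Y]
    (α : Measure X) (β : Measure Y) [IsFiniteMeasure α] [IsFiniteMeasure β]
    (hα : α ≠ 0) (hβ : β ≠ 0)
    (φ₁ φ₂ : ℝ → ℝ≥0∞)
    (hφ₁ : IsEntropyFunction φ₁) (hφ₂ : IsEntropyFunction φ₂)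
    (L : ℝ) :
    (∀ (c : X × Y → ℝ), Continuous c → (∀ z, L ≤ c z) →
      ∀ (π : Measure (X × Y)), IsFiniteMeasure π →
        ((L * (π Set.univ).toReal : ℝ) : EReal)
          + ((ENNReal.ofReal (α Set.univ).toReal
              * φ₁ ((π Set.univ).toReal / (α Set.univ).toReal) : ℝ≥0∞) : EReal)
          + ((ENNReal.ofReal (β Set.univ).toReal
              * φ₂ ((π Set.univ).toReal / (β Set.univ).toReal) : ℝ≥0∞) : EReal)
        ≤ UOTobj α β φ₁ φ₂ c π) ∧
    (phiRecession φ₁ = ⊤ → phiRecession φ₂ = ⊤ →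
      ∀ A : ℝ, ∃ K : ℝ, ∀ (π : Measure (X × Y)), IsFiniteMeasure π →
        K ≤ (π Set.univ).toReal →
        ∀ (c : X × Y → ℝ), Continuous c → (∀ z, L ≤ c z) →
          (A : EReal) ≤ UOTobj α β φ₁ φ₂ c π) :=
  stmt1_general α β hα φ₁ φ₂ hφ₁ hφ₂ L
end
end

section
/- Let X, Y be compact metric spaces, α, β nonzero finite positive Radon measures, F ⊂ ℝ^d compact, {c_θ}_{θ∈F} continuous costs, R̃ : F → [0,∞], φ₁, φ₂ entropy functions, and let (ε_n) ⊂ (0,∞) with ε_n → 0. Suppose there exists a sequence (η_j) ⊂ (0,∞) with η_j → 0 such that for every j there exist θ_j ∈ F and π^j ∈ M⁺(X×Y) with D_KL(π^j‖α⊗β) < +∞ and ∫ c_{θ_j} dπ^j + D_{φ₁}((π^j)₁‖α) + D_{φ₂}((π^j)₂‖β) + R̃(θ_j) ≤ CRUOT(α,β) + η_j. Then CRUOT_{ε_n}(α,β) → CRUOT(α,β) as n → ∞. -/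
open MeasureTheory Filter Set Pointwise
open scoped ENNReal NNReal

noncomputable section

/-- Strict convexity of an entropy function on its (finiteness) domain. -/
def IsStrictlyConvexEntropy (φ : ℝ → ℝ≥0∞) : Prop :=
  ∀ x ∈ Set.Ici (0 : ℝ), ∀ y ∈ Set.Ici (0 : ℝ), x ≠ y → φ x ≠ ⊤ → φ y ≠ ⊤ →
    ∀ t ∈ Set.Ioo (0 : ℝ) 1,
      φ (t * x + (1 - t) * y) < ENNReal.ofReal t * φ x + ENNReal.ofReal (1 - t) * φ y

/-- `dom φ = {x ∈ [0,∞) : φ(x) < ∞}`. -/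
def phiDom (φ : ℝ → ℝ≥0∞) : Set ℝ := {x | 0 ≤ x ∧ φ x ≠ ⊤}

/-- The entropy function `ι_{{1}}`: `0` at `1` and `+∞` elsewhere. -/
def iotaOne : ℝ → ℝ≥0∞ := fun x => if x = 1 then 0 else ⊤

/-- The entropy function `φ_KL(x) = x log x − x + 1` generating the KL divergence. -/
def phiKL : ℝ → ℝ≥0∞ := fun x => ENNReal.ofReal (x * Real.log x - x + 1)

/-- The strong compatibility condition (C2). -/
def StrongCompat (φ₁ φ₂ : ℝ → ℝ≥0∞) (mα mβ : ℝ) : Prop :=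
  ((interior (mα • phiDom φ₁) ∩ (mβ • phiDom φ₂)) ∪
    ((mα • phiDom φ₁) ∩ interior (mβ • phiDom φ₂))).Nonempty

/-- The objective `J_ε(θ,π) = ∫ c_θ dπ + D_{φ₁}(π₁‖α) + D_{φ₂}(π₂‖β) + ε·D_KL(π‖α⊗β) + R̃(θ)`. -/
def Jobj {X Y Θ : Type*} [MeasurableSpace X] [MeasurableSpace Y]
    (α : Measure X) (β : Measure Y) (φ₁ φ₂ : ℝ → ℝ≥0∞) (ε : ℝ)
    (c : Θ → X × Y → ℝ) (R : Θ → ℝ≥0∞) (θ : Θ) (π : Measure (X × Y)) : EReal :=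
  ((∫ z, c θ z ∂π : ℝ) : EReal)
    + ((phiDiv φ₁ (π.map Prod.fst) α : ℝ≥0∞) : EReal)
    + ((phiDiv φ₂ (π.map Prod.snd) β : ℝ≥0∞) : EReal)
    + ((ENNReal.ofReal ε * phiDiv phiKL π (α.prod β) : ℝ≥0∞) : EReal)
    + ((R θ : ℝ≥0∞) : EReal)

/-- `CRUOT_ε(α,β)`: the optimal value of the `ε`-entropic cost-regularized UOT problem. -/
def CRUOTval {X Y Θ : Type*} [MeasurableSpace X] [MeasurableSpace Y]
    (F : Set Θ) (α : Measure X) (β : Measure Y) (φ₁ φ₂ : ℝ → ℝ≥0∞) (ε : ℝ)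
    (c : Θ → X × Y → ℝ) (R : Θ → ℝ≥0∞) : EReal :=
  ⨅ (θ : Θ) (_ : θ ∈ F) (π : Measure (X × Y)) (_ : IsFiniteMeasure π),
    Jobj α β φ₁ φ₂ ε c R θ π


section Aux

variable {X Y Θ : Type*} [MeasurableSpace X] [MeasurableSpace Y]
  (α : Measure X) (β : Measure Y) (φ₁ φ₂ : ℝ → ℝ≥0∞)
  (c : Θ → X × Y → ℝ) (R : Θ → ℝ≥0∞)

lemma Jobj_ne_bot (e : ℝ) (θ : Θ) (π : Measure (X × Y)) :
    Jobj α β φ₁ φ₂ e c R θ π ≠ ⊥ := by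
  unfold Jobj
  simp only [ne_eq, EReal.add_eq_bot_iff, EReal.coe_ne_bot, EReal.coe_ennreal_ne_bot, or_self,
    not_false_eq_true, false_or, or_false]

lemma Jobj_split (e : ℝ) (θ : Θ) (π : Measure (X × Y)) :
    Jobj α β φ₁ φ₂ e c R θ π
      = Jobj α β φ₁ φ₂ 0 c R θ π
        + ((ENNReal.ofReal e * phiDiv phiKL π (α.prod β) : ℝ≥0∞) : EReal) := by
  unfold Jobj
  simp only [ENNReal.ofReal_zero, zero_mul, EReal.coe_ennreal_zero, add_zero]
  abel

lemma Jobj_zero_le (e : ℝ) (θ : Θ) (π : Measure (X × Y)) :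
    Jobj α β φ₁ φ₂ 0 c R θ π ≤ Jobj α β φ₁ φ₂ e c R θ π := by
  rw [Jobj_split α β φ₁ φ₂ c R e θ π]
  nth_rewrite 1 [← add_zero (Jobj α β φ₁ φ₂ 0 c R θ π)]
  exact add_le_add le_rfl (EReal.coe_ennreal_nonneg _)

lemma CRUOT_zero_le (F : Set Θ) (e : ℝ) :
    CRUOTval F α β φ₁ φ₂ 0 c R ≤ CRUOTval F α β φ₁ φ₂ e c R := by
  unfold CRUOTval
  exact iInf_mono fun θ => iInf_mono fun _ => iInf_mono fun π => iInf_mono fun _ =>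
    Jobj_zero_le α β φ₁ φ₂ c R e θ π

lemma CRUOT_le_Jobj (F : Set Θ) (e : ℝ) {θ : Θ} (hθ : θ ∈ F)
    (π : Measure (X × Y)) (hπ : IsFiniteMeasure π) :
    CRUOTval F α β φ₁ φ₂ e c R ≤ Jobj α β φ₁ φ₂ e c R θ π := by
  unfold CRUOTval
  refine le_trans (iInf_le _ θ) (le_trans (iInf_le _ hθ) (le_trans (iInf_le _ π) (iInf_le _ hπ)))

end Aux

/-- **Approximation lemma for convergence of entropic values.** If there are
almost-minimizers of the unregularized problem with finite KL divergence with respect to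
`α ⊗ β`, then the entropic values `CRUOT_{ε_n}(α,β)` converge to `CRUOT(α,β)` as `ε_n → 0`. -/
theorem stmt4
    {X Y : Type*} [MetricSpace X] [CompactSpace X] [MeasurableSpace X] [BorelSpace X]
    [MetricSpace Y] [CompactSpace Y] [MeasurableSpace Y] [BorelSpace Y]
    (α : Measure X) (β : Measure Y) [IsFiniteMeasure α] [IsFiniteMeasure β]
    (hα : α ≠ 0) (hβ : β ≠ 0)
    (φ₁ φ₂ : ℝ → ℝ≥0∞)
    (hφ₁ : IsEntropyFunction φ₁) (hφ₂ : IsEntropyFunction φ₂)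
    {d : ℕ} (F : Set (EuclideanSpace ℝ (Fin d)))
    (c : EuclideanSpace ℝ (Fin d) → X × Y → ℝ)
    (hc_cont : ∀ θ ∈ F, Continuous (c θ))
    (R : EuclideanSpace ℝ (Fin d) → ℝ≥0∞)
    (ε : ℕ → ℝ) (hεpos : ∀ n, 0 < ε n)
    (hε : Filter.Tendsto ε Filter.atTop (nhds 0))
    (η : ℕ → ℝ) (hηpos : ∀ j, 0 < η j)
    (hη : Filter.Tendsto η Filter.atTop (nhds 0))
    (happrox : ∀ j : ℕ, ∃ θj ∈ F, ∃ πj : Measure (X × Y), IsFiniteMeasure πj ∧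
      phiDiv phiKL πj (α.prod β) < ⊤ ∧
      Jobj α β φ₁ φ₂ 0 c R θj πj ≤ CRUOTval F α β φ₁ φ₂ 0 c R + ((η j : ℝ) : EReal)) :
    Filter.Tendsto (fun n => CRUOTval F α β φ₁ φ₂ (ε n) c R) Filter.atTop
      (nhds (CRUOTval F α β φ₁ φ₂ 0 c R)) := by
  set I0 := CRUOTval F α β φ₁ φ₂ 0 c R with hI0def
  have hub : ∀ n, I0 ≤ CRUOTval F α β φ₁ φ₂ (ε n) c R := fun n =>
    CRUOT_zero_le α β φ₁ φ₂ c R F (ε n)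
  by_cases htop : I0 = ⊤
  · have hall : ∀ n, CRUOTval F α β φ₁ φ₂ (ε n) c R = ⊤ := fun n =>
      top_le_iff.1 (htop ▸ hub n)
    rw [htop]
    simp only [hall]
    exact tendsto_const_nhds
  · have hbot : I0 ≠ ⊥ := by
      intro hb
      obtain ⟨θ0, hθ0, π0, hfin0, hKL0, hJ0⟩ := happrox 0
      rw [hb] at hJ0
      have : ((η 0 : ℝ) : EReal) ≠ ⊤ := EReal.coe_ne_top _
      rw [EReal.bot_add] at hJ0
      exact Jobj_ne_bot α β φ₁ φ₂ c R 0 θ0 π0 (le_bot_iff.1 hJ0)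
    set r := I0.toReal with hrdef
    have hI0 : (r : EReal) = I0 := EReal.coe_toReal htop hbot
    rw [← hI0]
    refine tendsto_order.2 ⟨fun a ha => ?_, fun b hb => ?_⟩
    · filter_upwards with n
      exact lt_of_lt_of_le ha (hI0 ▸ hub n)
    · -- find δ > 0 with (r + δ : EReal) < b
      obtain ⟨m, hrm, hmb⟩ := exists_between hb
      have hmtop : m ≠ ⊤ := (hmb.trans_le le_top).ne
      have hmbot : m ≠ ⊥ := (lt_of_le_of_lt (by exact bot_le) hrm).ne'
      set q := m.toReal with hqdef
      have hq : (q : EReal) = m := EReal.coe_toReal hmtop hmbot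
      have hrq : r < q := by
        have := hrm; rw [← hq] at this; exact_mod_cast this
      set δ : ℝ := q - r with hδdef
      have hδpos : 0 < δ := by simp [hδdef]; linarith
      -- choose j with η j < δ / 2
      have hj : ∀ᶠ j in atTop, η j < δ / 2 := by
        have := hη.eventually (eventually_lt_nhds (show (0:ℝ) < δ/2 by linarith))
        exact this
      obtain ⟨j, hjη⟩ := hj.exists
      obtain ⟨θj, hθj, πj, hfinj, hKLj, hJj⟩ := happrox j
      set K := phiDiv phiKL πj (α.prod β) with hKdef
      have hKtop : K ≠ ⊤ := hKLj.ne
      set M : ℝ := K.toReal with hMdef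
      have hM0 : 0 ≤ M := ENNReal.toReal_nonneg
      have hKM : K = ENNReal.ofReal M := (ENNReal.ofReal_toReal hKtop).symm
      -- eventually ε n * M ≤ δ/2
      have hev : ∀ᶠ n in atTop, ε n < δ / (2 * (M + 1)) := by
        have hpos : (0:ℝ) < δ / (2 * (M + 1)) := by positivity
        exact hε.eventually (eventually_lt_nhds hpos)
      filter_upwards [hev] with n hn
      have hεn := (hεpos n).le
      have hterm : ((ENNReal.ofReal (ε n) * K : ℝ≥0∞) : EReal) ≤ ((δ / 2 : ℝ) : EReal) := by
        rw [hKM, ← ENNReal.ofReal_mul hεn]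
        have h1 : ε n * M ≤ δ / 2 := by
          have h2 : ε n * M ≤ ε n * (M + 1) := by nlinarith
          have h3 : ε n * (M + 1) ≤ δ / 2 := by
            rw [div_mul_eq_div_div] at hn
            have := (lt_div_iff₀ (by linarith : (0:ℝ) < M + 1)).1 hn
            linarith
          linarith
        calc ((ENNReal.ofReal (ε n * M) : ℝ≥0∞) : EReal)
            ≤ ((ENNReal.ofReal (δ / 2) : ℝ≥0∞) : EReal) := by
              exact_mod_cast ENNReal.ofReal_le_ofReal h1
          _ = ((δ / 2 : ℝ) : EReal) := by
              rw [EReal.coe_ennreal_ofReal, max_eq_left (by linarith : (0:ℝ) ≤ δ/2)]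
      calc CRUOTval F α β φ₁ φ₂ (ε n) c R
          ≤ Jobj α β φ₁ φ₂ (ε n) c R θj πj := CRUOT_le_Jobj α β φ₁ φ₂ c R F (ε n) hθj πj hfinj
        _ = Jobj α β φ₁ φ₂ 0 c R θj πj + ((ENNReal.ofReal (ε n) * K : ℝ≥0∞) : EReal) :=
            Jobj_split α β φ₁ φ₂ c R (ε n) θj πj
        _ ≤ (I0 + ((η j : ℝ) : EReal)) + ((δ / 2 : ℝ) : EReal) := add_le_add hJj hterm
        _ = ((r + η j + δ / 2 : ℝ) : EReal) := by
            rw [← hI0]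
            push_cast
            ring
        _ < (q : EReal) := by
            have : r + η j + δ / 2 < q := by
              simp only [hδdef] at hjη ⊢
              linarith
            exact_mod_cast this
        _ ≤ b := by rw [hq]; exact hmb.le
end
end

section
/- Let X ⊂ ℝ^p and Y ⊂ ℝ^q be compact sets, let α, β be finite positive Radon measures on X, Y with m(α) = m(β), and let π ∈ Π(α,β) be a coupling. Then the Gromov–Wasserstein inner-product objective satisfies the identity ∫∫_{(X×Y)²} (⟨x,x'⟩ − ⟨y,y'⟩)² dπ(x,y) dπ(x',y') = ∫∫_{X×X} ⟨x,x'⟩² dα(x) dα(x') + ∫∫_{Y×Y} ⟨y,y'⟩² dβ(y) dβ(y') − 2·‖∫_{X×Y} y xᵀ dπ(x,y)‖_F². Consequently, over π ∈ Π(α,β), minimizing the left-hand side is equivalent to maximizing ‖∫ y xᵀ dπ‖_F. -/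
open MeasureTheory Filter Set Pointwise
open scoped ENNReal NNReal

noncomputable section

/-- The Frobenius norm of a real `q × p` matrix. -/
def frobNorm {q p : ℕ} (M : Matrix (Fin q) (Fin p) ℝ) : ℝ :=
  Real.sqrt (∑ i, ∑ j, (M i j) ^ 2)

/-- `C(π) = ∫ y xᵀ dπ(x,y)`, the entrywise integral of `(x,y) ↦ y xᵀ`. -/
def Cmat {p q : ℕ} (π : Measure ((Fin p → ℝ) × (Fin q → ℝ))) :
    Matrix (Fin q) (Fin p) ℝ :=
  Matrix.of fun i j => ∫ z, z.2 i * z.1 j ∂π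

/-- `∫ ⟨Mx, y⟩ dπ(x,y)` with the Euclidean inner product on `ℝ^q`. -/
def ipIntegral {p q : ℕ} (M : Matrix (Fin q) (Fin p) ℝ)
    (π : Measure ((Fin p → ℝ) × (Fin q → ℝ))) : ℝ :=
  ∫ z, ∑ i, ∑ j, M i j * z.1 j * z.2 i ∂π

/-- `M(π) = r·C(π)/‖C(π)‖_F` if `C(π) ≠ 0`, and `0` otherwise. -/
def Mopt {p q : ℕ} (r : ℝ) (π : Measure ((Fin p → ℝ) × (Fin q → ℝ))) :
    Matrix (Fin q) (Fin p) ℝ :=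
  if Cmat π = 0 then 0 else (r / frobNorm (Cmat π)) • Cmat π

/-- The Gromov–Wasserstein inner-product objective
`∫∫ (⟨x,x'⟩ − ⟨y,y'⟩)² dπ dπ`. -/
def gwObj {p q : ℕ} (π : Measure ((Fin p → ℝ) × (Fin q → ℝ))) : ℝ :=
  ∫ z, ∫ z', ((∑ j, z.1 j * z'.1 j) - (∑ i, z.2 i * z'.2 i)) ^ 2 ∂π ∂π

/-!
Let `u(z) ∈ ℝ^(p+q)` be the coordinates of `z = (x, y)` and `ε = (+1,…,+1,−1,…,−1)` the
signature, so that the integrand of `gwObj` is `(∑ₖ εₖ uₖ(z) uₖ(z'))²`. Expanding the square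
separates the variables, so the double integral is `∑ₖ,ₗ εₖ εₗ (∫ uₖ uₗ dπ)²`, a signed sum of
squared second moments of `π`. The `x`-`x` and `y`-`y` moments are those of the marginals `α`, `β`
and give the first two terms; the mixed moments are the entries of `∫ y xᵀ dπ` and occur twice
with sign `−1`. Compact support makes every second moment finite.
-/

theorem integral_integral_sq_sum_mul_eq {Z ι : Type*} [MeasurableSpace Z] [Fintype ι]
    (μ : Measure Z) (f : ι → Z → ℝ) (ε : ι → ℝ)
    (hf : ∀ i i', Integrable (fun z => f i z * f i' z) μ) :
    ∫ z, ∫ z', (∑ i, ε i * (f i z * f i z')) ^ 2 ∂μ ∂μ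
      = ∑ i, ∑ i', ε i * ε i' * (∫ z, f i z * f i' z ∂μ) ^ 2 := by
  have hexpand : ∀ z z', (∑ i, ε i * (f i z * f i z')) ^ 2
      = ∑ i, ∑ i', ε i * ε i' * (f i z * f i' z) * (f i z' * f i' z') := by
    intro z z'
    rw [sq, Finset.sum_mul_sum]
    exact Finset.sum_congr rfl fun i _ => Finset.sum_congr rfl fun i' _ => by ring
  have hinner : ∀ z, ∫ z', (∑ i, ε i * (f i z * f i z')) ^ 2 ∂μ
      = ∑ i, ∑ i', ε i * ε i' * (f i z * f i' z) * ∫ z', f i z' * f i' z' ∂μ := by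
    intro z
    simp_rw [hexpand z]
    rw [integral_finsetSum _ fun i _ => integrable_finsetSum _ fun i' _ =>
      (hf i i').const_mul _]
    refine Finset.sum_congr rfl fun i _ => ?_
    rw [integral_finsetSum _ fun i' _ => (hf i i').const_mul _]
    exact Finset.sum_congr rfl fun i' _ => integral_const_mul _ _
  simp_rw [hinner]
  rw [integral_finsetSum _ fun i _ => integrable_finsetSum _ fun i' _ =>
    ((hf i i').const_mul _).mul_const _]
  refine Finset.sum_congr rfl fun i _ => ?_
  rw [integral_finsetSum _ fun i' _ => ((hf i i').const_mul _).mul_const _]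
  refine Finset.sum_congr rfl fun i' _ => ?_
  rw [integral_mul_const, integral_const_mul]
  ring

theorem integral_integral_inner_sq_map {Z : Type*} [MeasurableSpace Z] {n : ℕ}
    (μ : Measure Z) {φ : Z → Fin n → ℝ} (hφ : Measurable φ)
    (hint : ∀ j j', Integrable (fun z => φ z j * φ z j') μ) :
    ∫ x, ∫ x', (∑ j, x j * x' j) ^ 2 ∂μ.map φ ∂μ.map φ
      = ∑ j, ∑ j', (∫ z, φ z j * φ z j' ∂μ) ^ 2 := by
  have hmeas : ∀ j j' : Fin n, AEStronglyMeasurable (fun x : Fin n → ℝ => x j * x j') (μ.map φ) :=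
    fun j j' => (by fun_prop : Continuous fun x : Fin n → ℝ => x j * x j').aestronglyMeasurable
  have hmoment : ∀ j j', ∫ x, x j * x j' ∂μ.map φ = ∫ z, φ z j * φ z j' ∂μ :=
    fun j j' => integral_map hφ.aemeasurable (hmeas j j')
  have hint_map : ∀ j j', Integrable (fun x : Fin n → ℝ => x j * x j') (μ.map φ) :=
    fun j j' => (integrable_map_measure (hmeas j j') hφ.aemeasurable).2 (hint j j')
  have h := integral_integral_sq_sum_mul_eq (μ.map φ) (fun j x => x j) (fun _ => 1) hint_map
  simpa only [one_mul, hmoment] using h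

section Coupling

variable {p q : ℕ}

def jointCoord : Fin p ⊕ Fin q → (Fin p → ℝ) × (Fin q → ℝ) → ℝ :=
  Sum.elim (fun j z => z.1 j) (fun i z => z.2 i)

theorem abs_jointCoord_le_norm (k : Fin p ⊕ Fin q) (z : (Fin p → ℝ) × (Fin q → ℝ)) :
    |jointCoord k z| ≤ ‖z‖ := by
  rcases k with j | i
  · exact (norm_le_pi_norm z.1 j).trans (norm_fst_le z)
  · exact (norm_le_pi_norm z.2 i).trans (norm_snd_le z)

theorem integrable_jointCoord_mul {π : Measure ((Fin p → ℝ) × (Fin q → ℝ))}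
    [IsFiniteMeasure π] {R : ℝ} (hR : ∀ᵐ z ∂π, ‖z‖ ≤ R) (k k' : Fin p ⊕ Fin q) :
    Integrable (fun z => jointCoord k z * jointCoord k' z) π := by
  have hcont : ∀ k : Fin p ⊕ Fin q, Continuous (jointCoord k) := by
    rintro (j | i)
    · exact (continuous_apply j).comp continuous_fst
    · exact (continuous_apply i).comp continuous_snd
  refine Integrable.of_bound ((hcont k).mul (hcont k')).aestronglyMeasurable (R * R) ?_
  filter_upwards [hR] with z hz
  rw [norm_mul]
  exact mul_le_mul ((abs_jointCoord_le_norm k z).trans hz)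
    ((abs_jointCoord_le_norm k' z).trans hz) (norm_nonneg _) ((norm_nonneg z).trans hz)

theorem gwObj_eq_of_ae_norm_le (π : Measure ((Fin p → ℝ) × (Fin q → ℝ))) [IsFiniteMeasure π]
    {R : ℝ} (hR : ∀ᵐ z ∂π, ‖z‖ ≤ R) :
    gwObj π = (∫ x, ∫ x', (∑ j, x j * x' j) ^ 2 ∂π.map Prod.fst ∂π.map Prod.fst)
        + (∫ y, ∫ y', (∑ i, y i * y' i) ^ 2 ∂π.map Prod.snd ∂π.map Prod.snd)
        - 2 * (frobNorm (Cmat π)) ^ 2 := by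
  have hint := integrable_jointCoord_mul hR
  have hgw := integral_integral_sq_sum_mul_eq π jointCoord (Sum.elim 1 (-1)) hint
  have hfrob : frobNorm (Cmat π) ^ 2 = ∑ i, ∑ j, (∫ z, z.2 i * z.1 j ∂π) ^ 2 := by
    rw [frobNorm, Real.sq_sqrt (by positivity)]
    rfl
  have hmixed : ∀ j i, ∫ z, z.1 j * z.2 i ∂π = ∫ z, z.2 i * z.1 j ∂π :=
    fun j i => integral_congr_ae (ae_of_all _ fun z => mul_comm _ _)
  rw [integral_integral_inner_sq_map π measurable_fst fun j j' => hint (.inl j) (.inl j'),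
    integral_integral_inner_sq_map π measurable_snd fun i i' => hint (.inr i) (.inr i'), hfrob,
    gwObj]
  simp only [Fintype.sum_sum_type, jointCoord, Sum.elim_inl, Sum.elim_inr, Pi.one_apply,
    Pi.neg_apply, one_mul, mul_one, neg_mul, neg_neg, Finset.sum_neg_distrib, hmixed,
    ← sub_eq_add_neg, Finset.sum_add_distrib] at hgw
  rw [hgw, Finset.sum_comm (s := (Finset.univ : Finset (Fin p)))
    (t := (Finset.univ : Finset (Fin q)))]
  ring

end Coupling

theorem stmt6_general {p q : ℕ}
    (X : Set (Fin p → ℝ)) (Y : Set (Fin q → ℝ))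
    (hX : IsCompact X) (hY : IsCompact Y)
    (α : Measure (Fin p → ℝ)) (β : Measure (Fin q → ℝ))
    (hαsupp : α Xᶜ = 0) (hβsupp : β Yᶜ = 0) :
    (∀ π : Measure ((Fin p → ℝ) × (Fin q → ℝ)), IsFiniteMeasure π →
      π.map Prod.fst = α → π.map Prod.snd = β →
      gwObj π = (∫ x, ∫ x', (∑ j, x j * x' j) ^ 2 ∂α ∂α)
        + (∫ y, ∫ y', (∑ i, y i * y' i) ^ 2 ∂β ∂β)
        - 2 * (frobNorm (Cmat π)) ^ 2) ∧
    (∀ π π' : Measure ((Fin p → ℝ) × (Fin q → ℝ)),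
      IsFiniteMeasure π → π.map Prod.fst = α → π.map Prod.snd = β →
      IsFiniteMeasure π' → π'.map Prod.fst = α → π'.map Prod.snd = β →
      (gwObj π ≤ gwObj π' ↔ frobNorm (Cmat π') ≤ frobNorm (Cmat π))) := by
  obtain ⟨R, hR⟩ := (hX.prod hY).isBounded.exists_norm_le
  have hdecomp : ∀ π : Measure ((Fin p → ℝ) × (Fin q → ℝ)), IsFiniteMeasure π →
      π.map Prod.fst = α → π.map Prod.snd = β →
      gwObj π = (∫ x, ∫ x', (∑ j, x j * x' j) ^ 2 ∂α ∂α)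
        + (∫ y, ∫ y', (∑ i, y i * y' i) ^ 2 ∂β ∂β) - 2 * (frobNorm (Cmat π)) ^ 2 := by
    rintro π hπ rfl rfl
    have hfst : ∀ᵐ z ∂π, z.1 ∈ X := ae_of_ae_map measurable_fst.aemeasurable (ae_iff.2 hαsupp)
    have hsnd : ∀ᵐ z ∂π, z.2 ∈ Y := ae_of_ae_map measurable_snd.aemeasurable (ae_iff.2 hβsupp)
    refine gwObj_eq_of_ae_norm_le π (R := R) ?_
    filter_upwards [hfst, hsnd] with z hx hy using hR z ⟨hx, hy⟩
  refine ⟨hdecomp, fun π π' hπ hπα hπβ hπ' hπ'α hπ'β => ?_⟩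
  rw [hdecomp π hπ hπα hπβ, hdecomp π' hπ' hπ'α hπ'β, sub_le_sub_iff_left,
    mul_le_mul_iff_right₀ two_pos]
  exact sq_le_sq₀ (Real.sqrt_nonneg _) (Real.sqrt_nonneg _)

/-- **Decomposition of the Gromov–Wasserstein inner-product objective.** For a coupling
`π ∈ Π(α,β)` of finite positive measures of equal mass supported on compact sets,
`∫∫ (⟨x,x'⟩−⟨y,y'⟩)² dπ dπ = ∫∫ ⟨x,x'⟩² dα dα + ∫∫ ⟨y,y'⟩² dβ dβ − 2‖∫ yxᵀ dπ‖_F²`;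
consequently, over couplings, minimizing the GW objective is equivalent to maximizing
`‖∫ yxᵀ dπ‖_F`. -/
theorem stmt6 {p q : ℕ}
    (X : Set (Fin p → ℝ)) (Y : Set (Fin q → ℝ))
    (hX : IsCompact X) (hY : IsCompact Y)
    (α : Measure (Fin p → ℝ)) (β : Measure (Fin q → ℝ))
    [IsFiniteMeasure α] [IsFiniteMeasure β]
    (hαsupp : α Xᶜ = 0) (hβsupp : β Yᶜ = 0)
    (hmass : α Set.univ = β Set.univ) :
    (∀ π : Measure ((Fin p → ℝ) × (Fin q → ℝ)), IsFiniteMeasure π →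
      π.map Prod.fst = α → π.map Prod.snd = β →
      gwObj π = (∫ x, ∫ x', (∑ j, x j * x' j) ^ 2 ∂α ∂α)
        + (∫ y, ∫ y', (∑ i, y i * y' i) ^ 2 ∂β ∂β)
        - 2 * (frobNorm (Cmat π)) ^ 2) ∧
    (∀ π π' : Measure ((Fin p → ℝ) × (Fin q → ℝ)),
      IsFiniteMeasure π → π.map Prod.fst = α → π.map Prod.snd = β →
      IsFiniteMeasure π' → π'.map Prod.fst = α → π'.map Prod.snd = β →
      (gwObj π ≤ gwObj π' ↔ frobNorm (Cmat π') ≤ frobNorm (Cmat π))) :=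
  stmt6_general X Y hX hY α β hαsupp hβsupp
end
end

section
/- Let X ⊂ ℝ^p and Y ⊂ ℝ^q be compact sets, let α, β be finite positive Radon measures on X, Y with m(α) = m(β) > 0, and fix r > 0. Let F_r = {M ∈ ℝ^{q×p} : ‖M‖_F ≤ r}. Then a coupling π* ∈ Π(α,β) minimizes the Gromov–Wasserstein inner-product problem GW-IP(α,β): min over π ∈ Π(α,β) of ∫∫ (⟨x,x'⟩ − ⟨y,y'⟩)² dπ(x,y) dπ(x',y'), if and only if π* minimizes over Π(α,β) the function π ↦ min over M ∈ F_r of −∫_{X×Y} ⟨Mx,y⟩ dπ(x,y). That is, the two problems have the same minimizers in π. -/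
open MeasureTheory Filter Set Pointwise
open scoped ENNReal NNReal

noncomputable section

/-- The reduced objective `π ↦ min_{‖M‖_F ≤ r} −∫ ⟨Mx,y⟩ dπ`. -/
def redObj {p q : ℕ} (r : ℝ) (π : Measure ((Fin p → ℝ) × (Fin q → ℝ))) : ℝ :=
  ⨅ M : {M : Matrix (Fin q) (Fin p) ℝ // frobNorm M ≤ r}, -(ipIntegral M.1 π)

/-!
For a coupling `π` of `α` and `β`, expanding the square gives
`gwObj π = ‖∫ x xᵀ dα‖² + ‖∫ y yᵀ dβ‖² - 2 ‖C(π)‖²` in Frobenius norms, with `C(π) = ∫ y xᵀ dπ`;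
only the last term depends on `π` beyond its marginals. By Cauchy–Schwarz for the Frobenius
inner product, `min_{‖M‖ ≤ r} -⟨M, C(π)⟩ = -r ‖C(π)‖`. On `Π(α, β)` both objectives are therefore
strictly decreasing functions of `‖C(π)‖`, so they have the same minimisers. Compactness of the
supports is what makes all second moments integrable.
-/

open scoped InnerProductSpace

section Frobenius

variable {q p : ℕ}

def frobVec : Matrix (Fin q) (Fin p) ℝ ≃ EuclideanSpace ℝ (Fin q × Fin p) :=
  (Equiv.curry _ _ _).symm.trans (WithLp.equiv 2 _).symm

@[simp]
theorem frobVec_apply (M : Matrix (Fin q) (Fin p) ℝ) (k : Fin q × Fin p) :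
    frobVec M k = M k.1 k.2 :=
  rfl

theorem frobNorm_eq_norm_frobVec (M : Matrix (Fin q) (Fin p) ℝ) : frobNorm M = ‖frobVec M‖ := by
  simp [EuclideanSpace.norm_eq, frobNorm, Fintype.sum_prod_type]

theorem frobNorm_nonneg (M : Matrix (Fin q) (Fin p) ℝ) : 0 ≤ frobNorm M :=
  Real.sqrt_nonneg _

theorem frobNorm_sq (M : Matrix (Fin q) (Fin p) ℝ) : frobNorm M ^ 2 = ∑ i, ∑ j, M i j ^ 2 :=
  Real.sq_sqrt (by positivity)

theorem sum_mul_eq_inner_frobVec (M N : Matrix (Fin q) (Fin p) ℝ) :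
    ∑ i, ∑ j, M i j * N i j = ⟪frobVec M, frobVec N⟫_ℝ := by
  simp [PiLp.inner_apply, Fintype.sum_prod_type, mul_comm]

end Frobenius

theorem iInf_neg_inner_of_norm_le {E : Type*} [NormedAddCommGroup E] [InnerProductSpace ℝ E]
    (c : E) {r : ℝ} (hr : 0 ≤ r) :
    ⨅ v : {v : E // ‖v‖ ≤ r}, -⟪(v : E), c⟫_ℝ = -(r * ‖c‖) := by
  have hle (v : {v : E // ‖v‖ ≤ r}) : -(r * ‖c‖) ≤ -⟪(v : E), c⟫_ℝ :=
    neg_le_neg ((real_inner_le_norm _ _).trans (mul_le_mul_of_nonneg_right v.2 (norm_nonneg c)))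
  obtain ⟨v₀, hv₀, hv₀c⟩ : ∃ v₀ : E, ‖v₀‖ ≤ r ∧ ⟪v₀, c⟫_ℝ = r * ‖c‖ := by
    rcases eq_or_ne c 0 with rfl | hc
    · exact ⟨0, by simpa using hr, by simp⟩
    have hc' : ‖c‖ ≠ 0 := norm_ne_zero_iff.2 hc
    refine ⟨(r / ‖c‖) • c, ?_, ?_⟩
    · rw [norm_smul, Real.norm_of_nonneg (by positivity), div_mul_cancel₀ _ hc']
    · rw [real_inner_smul_left, real_inner_self_eq_norm_sq]
      field_simp
  have : Nonempty {v : E // ‖v‖ ≤ r} := ⟨⟨v₀, hv₀⟩⟩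
  refine le_antisymm ?_ (le_ciInf hle)
  calc ⨅ v : {v : E // ‖v‖ ≤ r}, -⟪(v : E), c⟫_ℝ ≤ -⟪v₀, c⟫_ℝ :=
        ciInf_le ⟨_, Set.forall_mem_range.2 hle⟩ ⟨v₀, hv₀⟩
    _ = -(r * ‖c‖) := by rw [hv₀c]

theorem Continuous.integrable_of_ae_mem_isCompact {Ω E : Type*} [MeasurableSpace Ω]
    [TopologicalSpace Ω] [OpensMeasurableSpace Ω] [T2Space Ω] [NormedAddCommGroup E]
    {μ : Measure Ω} [IsFiniteMeasure μ] {f : Ω → E} (hf : Continuous f) {K : Set Ω}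
    (hK : IsCompact K) (hμK : ∀ᵐ x ∂μ, x ∈ K) : Integrable f μ :=
  (hf.continuousOn.integrableOn_compact hK).integrable_of_ae_notMem_eq_zero
    (hμK.mono fun _ hx hx' => (hx' hx).elim)

section ProductIntegrals

variable {Ω Ω' ι : Type*} [MeasurableSpace Ω] [MeasurableSpace Ω'] {μ : Measure Ω}
  {ν : Measure Ω'} (s : Finset ι) {f : ι → Ω → ℝ} {g : ι → Ω' → ℝ}

theorem integrable_prod_sum_mul (hf : ∀ k, Integrable (f k) μ) (hg : ∀ k, Integrable (g k) ν) :
    Integrable (fun w : Ω × Ω' => ∑ k ∈ s, f k w.1 * g k w.2) (μ.prod ν) :=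
  integrable_finsetSum s fun k _ => (hf k).mul_prod (hg k)

theorem integral_prod_sum_mul [SFinite μ] [SFinite ν] (hf : ∀ k, Integrable (f k) μ)
    (hg : ∀ k, Integrable (g k) ν) :
    ∫ w, ∑ k ∈ s, f k w.1 * g k w.2 ∂μ.prod ν = ∑ k ∈ s, (∫ x, f k x ∂μ) * ∫ y, g k y ∂ν := by
  rw [integral_finsetSum s fun k _ => (hf k).mul_prod (hg k)]
  exact Finset.sum_congr rfl fun k _ => integral_prod_mul _ _

end ProductIntegrals

theorem sum_mul_mul_sum_mul_eq_sum_prod {ι κ : Type*} [Fintype ι] [Fintype κ] (u v : ι → ℝ)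
    (u' v' : κ → ℝ) :
    (∑ k, u k * v k) * (∑ l, u' l * v' l) =
      ∑ kl : ι × κ, (u kl.1 * u' kl.2) * (v kl.1 * v' kl.2) := by
  rw [Fintype.sum_prod_type, Finset.sum_mul_sum]
  exact Finset.sum_congr rfl fun k _ => Finset.sum_congr rfl fun l _ => by ring

def secondMoment {n : ℕ} (μ : Measure (Fin n → ℝ)) : Matrix (Fin n) (Fin n) ℝ :=
  Matrix.of fun j j' => ∫ x, x j * x j' ∂μ

theorem secondMoment_map {Ω : Type*} [MeasurableSpace Ω] {μ : Measure Ω} {n : ℕ}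
    {f : Ω → Fin n → ℝ} (hf : Measurable f) (j j' : Fin n) :
    secondMoment (μ.map f) j j' = ∫ z, f z j * f z j' ∂μ :=
  integral_map hf.aemeasurable (by fun_prop)

section Couplings

variable {p q : ℕ} {π : Measure ((Fin p → ℝ) × (Fin q → ℝ))} [IsFiniteMeasure π]
  {K : Set ((Fin p → ℝ) × (Fin q → ℝ))}

theorem gwObj_eq (hK : IsCompact K) (hπK : ∀ᵐ z ∂π, z ∈ K) :
    gwObj π = frobNorm (secondMoment (π.map Prod.fst)) ^ 2 - 2 * frobNorm (Cmat π) ^ 2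
      + frobNorm (secondMoment (π.map Prod.snd)) ^ 2 := by
  have hcont (f : (Fin p → ℝ) × (Fin q → ℝ) → ℝ) (hf : Continuous f) : Integrable f π :=
    hf.integrable_of_ae_mem_isCompact hK hπK
  have hA (k : Fin p × Fin p) : Integrable (fun z => z.1 k.1 * z.1 k.2) π := hcont _ (by fun_prop)
  have hC (k : Fin q × Fin p) : Integrable (fun z => z.2 k.1 * z.1 k.2) π := hcont _ (by fun_prop)
  have hB (k : Fin q × Fin q) : Integrable (fun z => z.2 k.1 * z.2 k.2) π := hcont _ (by fun_prop)
  have hexpand (z z' : (Fin p → ℝ) × (Fin q → ℝ)) :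
      ((∑ j, z.1 j * z'.1 j) - ∑ i, z.2 i * z'.2 i) ^ 2 =
        ∑ k : Fin p × Fin p, (z.1 k.1 * z.1 k.2) * (z'.1 k.1 * z'.1 k.2)
          - 2 * ∑ k : Fin q × Fin p, (z.2 k.1 * z.1 k.2) * (z'.2 k.1 * z'.1 k.2)
          + ∑ k : Fin q × Fin q, (z.2 k.1 * z.2 k.2) * (z'.2 k.1 * z'.2 k.2) := by
    simp only [← sum_mul_mul_sum_mul_eq_sum_prod]
    ring
  have hiA := integrable_prod_sum_mul Finset.univ hA hA
  have hiC := integrable_prod_sum_mul Finset.univ hC hC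
  have hiB := integrable_prod_sum_mul Finset.univ hB hB
  simp_rw [gwObj, hexpand]
  rw [integral_integral ((hiA.sub (hiC.const_mul 2)).add hiB), integral_add ?_ hiB,
    integral_sub hiA (hiC.const_mul 2), integral_const_mul, integral_prod_sum_mul _ hA hA,
    integral_prod_sum_mul _ hC hC, integral_prod_sum_mul _ hB hB]
  · rw [frobNorm_sq, frobNorm_sq, frobNorm_sq]
    simp only [Fintype.sum_prod_type, secondMoment_map measurable_fst,
      secondMoment_map measurable_snd, Cmat, Matrix.of_apply, sq]
  · exact hiA.sub (hiC.const_mul 2)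

theorem ipIntegral_eq_sum (hK : IsCompact K) (hπK : ∀ᵐ z ∂π, z ∈ K)
    (M : Matrix (Fin q) (Fin p) ℝ) : ipIntegral M π = ∑ i, ∑ j, M i j * Cmat π i j := by
  have hC (i : Fin q) (j : Fin p) : Integrable (fun z => M i j * (z.2 i * z.1 j)) π :=
    (by fun_prop : Continuous _).integrable_of_ae_mem_isCompact hK hπK
  calc ipIntegral M π = ∫ z, ∑ i, ∑ j, M i j * (z.2 i * z.1 j) ∂π := by
        unfold ipIntegral
        congr! 2 with z
        exact Finset.sum_congr rfl fun i _ => Finset.sum_congr rfl fun j _ => by ring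
    _ = ∑ i, ∑ j, M i j * Cmat π i j := by
        rw [integral_finsetSum _ fun i _ => integrable_finsetSum _ fun j _ => hC i j]
        simp only [integral_finsetSum _ fun j _ => hC _ j, integral_const_mul, Cmat,
          Matrix.of_apply]

theorem redObj_eq (hK : IsCompact K) (hπK : ∀ᵐ z ∂π, z ∈ K) {r : ℝ} (hr : 0 ≤ r) :
    redObj r π = -(r * frobNorm (Cmat π)) := by
  rw [redObj, frobNorm_eq_norm_frobVec, ← iInf_neg_inner_of_norm_le _ hr]
  refine (frobVec.subtypeEquiv fun M => by rw [frobNorm_eq_norm_frobVec]).iInf_congr fun M => ?_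
  rw [ipIntegral_eq_sum hK hπK, sum_mul_eq_inner_frobVec]
  rfl

end Couplings

theorem stmt7_general {p q : ℕ}
    (X : Set (Fin p → ℝ)) (Y : Set (Fin q → ℝ))
    (hX : IsCompact X) (hY : IsCompact Y)
    (α : Measure (Fin p → ℝ)) (β : Measure (Fin q → ℝ))
    (hαsupp : α Xᶜ = 0) (hβsupp : β Yᶜ = 0)
    (r : ℝ) (hr : 0 < r)
    (πstar : Measure ((Fin p → ℝ) × (Fin q → ℝ))) [IsFiniteMeasure πstar]
    (hπ₁ : πstar.map Prod.fst = α) (hπ₂ : πstar.map Prod.snd = β) :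
    ((∀ π : Measure ((Fin p → ℝ) × (Fin q → ℝ)), IsFiniteMeasure π →
        π.map Prod.fst = α → π.map Prod.snd = β → gwObj πstar ≤ gwObj π) ↔
      (∀ π : Measure ((Fin p → ℝ) × (Fin q → ℝ)), IsFiniteMeasure π →
        π.map Prod.fst = α → π.map Prod.snd = β → redObj r πstar ≤ redObj r π)) := by
  have hK : IsCompact (X ×ˢ Y) := hX.prod hY
  have hsupp {π : Measure ((Fin p → ℝ) × (Fin q → ℝ))} (h₁ : π.map Prod.fst = α)
      (h₂ : π.map Prod.snd = β) : ∀ᵐ z ∂π, z ∈ X ×ˢ Y :=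
    (ae_of_ae_map measurable_fst.aemeasurable (h₁ ▸ mem_ae_iff.2 hαsupp)).and
      (ae_of_ae_map measurable_snd.aemeasurable (h₂ ▸ mem_ae_iff.2 hβsupp))
  have hgw (π : Measure ((Fin p → ℝ) × (Fin q → ℝ))) [IsFiniteMeasure π]
      (h₁ : π.map Prod.fst = α) (h₂ : π.map Prod.snd = β) :
      gwObj π = frobNorm (secondMoment α) ^ 2 + frobNorm (secondMoment β) ^ 2
        - 2 * frobNorm (Cmat π) ^ 2 := by
    rw [gwObj_eq hK (hsupp h₁ h₂), h₁, h₂]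
    ring
  have hred (π : Measure ((Fin p → ℝ) × (Fin q → ℝ))) [IsFiniteMeasure π]
      (h₁ : π.map Prod.fst = α) (h₂ : π.map Prod.snd = β) :
      redObj r π = -(r * frobNorm (Cmat π)) :=
    redObj_eq hK (hsupp h₁ h₂) hr.le
  refine forall_congr' fun π => forall_congr' fun _ => forall_congr' fun h₁ =>
    forall_congr' fun h₂ => ?_
  rw [hgw πstar hπ₁ hπ₂, hgw π h₁ h₂, hred πstar hπ₁ hπ₂, hred π h₁ h₂, neg_le_neg_iff,
    sub_le_sub_iff_left, mul_le_mul_iff_right₀ two_pos, mul_le_mul_iff_right₀ hr,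
    sq_le_sq₀ (frobNorm_nonneg _) (frobNorm_nonneg _)]

/-- **Equivalence of GW-IP and cost-regularized OT** (Proposition on GW-IP). A coupling
`π* ∈ Π(α,β)` minimizes the Gromov–Wasserstein inner-product problem if and only if it
minimizes `π ↦ min_{M ∈ F_r} −∫ ⟨Mx,y⟩ dπ` over `Π(α,β)`. -/
theorem stmt7 {p q : ℕ}
    (X : Set (Fin p → ℝ)) (Y : Set (Fin q → ℝ))
    (hX : IsCompact X) (hY : IsCompact Y)
    (α : Measure (Fin p → ℝ)) (β : Measure (Fin q → ℝ))
    [IsFiniteMeasure α] [IsFiniteMeasure β]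
    (hαsupp : α Xᶜ = 0) (hβsupp : β Yᶜ = 0)
    (hmass : α Set.univ = β Set.univ) (hαpos : α ≠ 0)
    (r : ℝ) (hr : 0 < r)
    (πstar : Measure ((Fin p → ℝ) × (Fin q → ℝ))) [IsFiniteMeasure πstar]
    (hπ₁ : πstar.map Prod.fst = α) (hπ₂ : πstar.map Prod.snd = β) :
    ((∀ π : Measure ((Fin p → ℝ) × (Fin q → ℝ)), IsFiniteMeasure π →
        π.map Prod.fst = α → π.map Prod.snd = β → gwObj πstar ≤ gwObj π) ↔
      (∀ π : Measure ((Fin p → ℝ) × (Fin q → ℝ)), IsFiniteMeasure π →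
        π.map Prod.fst = α → π.map Prod.snd = β → redObj r πstar ≤ redObj r π)) :=
  stmt7_general X Y hX hY α β hαsupp hβsupp r hr πstar hπ₁ hπ₂
end
end

section
/- Let x₁,…,x_n ∈ ℝ^p, y₁,…,y_m ∈ ℝ^q, weights a ∈ (0,∞)^n, b ∈ (0,∞)^m, and ε, r > 0. Let φ₁, φ₂ be superlinear entropy functions. Define J(P, M) = −Σ_{i,j} ⟨M x_i, y_j⟩ P_{ij} + Σ_i a_i·φ₁(P_i/a_i) + Σ_j b_j·φ₂(P^j/b_j) + ε·Σ_{i,j} a_i b_j·φ_KL(P_{ij}/(a_i b_j)) for P ∈ [0,∞)^{n×m} and M ∈ F_r = {M ∈ ℝ^{q×p} : ‖M‖_F ≤ r}, where P_i = Σ_j P_{ij}, P^j = Σ_i P_{ij}, φ_KL(x) = x log x − x + 1. Consider the block coordinate descent sequence: P^{k+1} = argmin over P ≥ 0 of J(P, M_k), and M_{k+1} = M(P^{k+1}) := r·C(P^{k+1})/‖C(P^{k+1})‖_F where C(P) = Σ_{i,j} P_{ij}·y_j x_iᵀ (and M(P) = 0 if C(P) = 0). Then every limit point (M̄, P̄)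 of the sequence ((M_k, P^k)) is a blockwise minimum of J: P̄ minimizes P ↦ J(P, M̄) over [0,∞)^{n×m}, and M̄ minimizes M ↦ −Σ_{i,j} ⟨M x_i, y_j⟩ P̄_{ij} over F_r; equivalently, (M̄, P̄) is a stationary point of the objective of the discrete CR_rUOT_ε problem. -/
/-! Block coordinate descent never increases `J`: the `P`-step is an exact
minimization and `M(P)` minimizes the linear part over the Frobenius ball (Cauchy–Schwarz),
so `J(M_l, P_l) ≤ J(M_k, P)` for all `k < l` and all admissible `P`. Along the convergent
subsequence, lower semicontinuity of `J` (the entropy terms are l.s.c., the linear part is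
continuous) gives `J(M̄, P̄) ≤ J(M_k, P)`, and letting `k → ∞` along the subsequence gives
`J(M̄, P̄) ≤ J(M̄, P)`. The `M`-block minimality passes to the limit by continuity of the
linear part. -/

open Filter Set
open scoped ENNReal NNReal

noncomputable section

/-- The discrete objective
`J(P,M) = −Σ_{ij} ⟨Mx_i,y_j⟩ P_{ij} + Σ_i a_i φ₁(P_i/a_i) + Σ_j b_j φ₂(P^j/b_j)
          + ε Σ_{ij} a_i b_j φ_KL(P_{ij}/(a_i b_j))`. -/
def Jdisc {n m p q : ℕ} (x : Fin n → Fin p → ℝ) (y : Fin m → Fin q → ℝ)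
    (a : Fin n → ℝ) (b : Fin m → ℝ) (φ₁ φ₂ : ℝ → ℝ≥0∞) (ε : ℝ)
    (M : Matrix (Fin q) (Fin p) ℝ) (P : Fin n → Fin m → ℝ) : EReal :=
  ((-(∑ i, ∑ j, (∑ l, ∑ k, M l k * x i k * y j l) * P i j) : ℝ) : EReal)
    + ((∑ i, ENNReal.ofReal (a i) * φ₁ ((∑ j, P i j) / a i) : ℝ≥0∞) : EReal)
    + ((∑ j, ENNReal.ofReal (b j) * φ₂ ((∑ i, P i j) / b j) : ℝ≥0∞) : EReal)
    + ((ENNReal.ofReal ε *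
        ∑ i, ∑ j, ENNReal.ofReal (a i * b j) * phiKL (P i j / (a i * b j)) : ℝ≥0∞) : EReal)

/-- `C(P) = Σ_{ij} P_{ij} y_j x_iᵀ`. -/
def Cdisc {n m p q : ℕ} (x : Fin n → Fin p → ℝ) (y : Fin m → Fin q → ℝ)
    (P : Fin n → Fin m → ℝ) : Matrix (Fin q) (Fin p) ℝ :=
  Matrix.of fun l k => ∑ i, ∑ j, P i j * y j l * x i k

/-- The closed-form `M`-update `M(P) = r·C(P)/‖C(P)‖_F` (`0` if `C(P) = 0`). -/
def MoptD {n m p q : ℕ} (x : Fin n → Fin p → ℝ) (y : Fin m → Fin q → ℝ) (r : ℝ)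
    (P : Fin n → Fin m → ℝ) : Matrix (Fin q) (Fin p) ℝ :=
  if Cdisc x y P = 0 then 0
  else (r / frobNorm (Cdisc x y P)) • Cdisc x y P

/-- The linear part `M ↦ −Σ_{ij} ⟨Mx_i,y_j⟩ P_{ij}`. -/
def linObj {n m p q : ℕ} (x : Fin n → Fin p → ℝ) (y : Fin m → Fin q → ℝ)
    (M : Matrix (Fin q) (Fin p) ℝ) (P : Fin n → Fin m → ℝ) : ℝ :=
  -(∑ i, ∑ j, (∑ l, ∑ k, M l k * x i k * y j l) * P i j)

open Function Topology

section BlockCoordinateDescent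

variable {X Y β : Type*}

theorem blockDescent_le [Preorder β] (f : X → Y → β) (S : Set Y) (Ms : ℕ → X) (Ps : ℕ → Y)
    (hPS : ∀ k, Ps (k + 1) ∈ S)
    (hPmin : ∀ k, ∀ P ∈ S, f (Ms k) (Ps (k + 1)) ≤ f (Ms k) P)
    (hMdesc : ∀ k, f (Ms (k + 1)) (Ps (k + 1)) ≤ f (Ms k) (Ps (k + 1))) :
    ∀ ⦃k l⦄, k < l → ∀ P ∈ S, f (Ms l) (Ps l) ≤ f (Ms k) P := by
  intro k l hkl P hP
  have hanti : Antitone fun k => f (Ms k) (Ps (k + 1)) :=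
    antitone_nat_of_succ_le fun k => (hPmin (k + 1) _ (hPS k)).trans (hMdesc k)
  obtain ⟨u, rfl⟩ := Nat.exists_eq_add_of_lt hkl
  exact (hMdesc (k + u)).trans ((hanti (Nat.le_add_right k u)).trans (hPmin k P hP))

variable [LinearOrder β]

theorem LowerSemicontinuousAt.le_of_tendsto_of_eventually_le [TopologicalSpace X] {f : X → β}
    {x : X} (hf : LowerSemicontinuousAt f x) {l : Filter ℕ} [l.NeBot] {z : ℕ → X}
    (hz : Tendsto z l (𝓝 x)) {c : β} (hle : ∀ᶠ t in l, f (z t) ≤ c) : f x ≤ c :=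
  le_of_forall_lt fun d hd =>
    let ⟨_, hlt, hzc⟩ := ((hz.eventually (hf d hd)).and hle).exists
    hlt.trans_le hzc

variable [TopologicalSpace β] [OrderClosedTopology β]
variable [TopologicalSpace X] [TopologicalSpace Y]

theorem le_of_tendsto_of_blockDescent {f : X → Y → β} {Ms : ℕ → X} {Ps : ℕ → Y}
    {σ : ℕ → ℕ} (hσ : StrictMono σ) {x₀ : X} {y₀ : Y}
    (hMlim : Tendsto (Ms ∘ σ) atTop (𝓝 x₀)) (hPlim : Tendsto (Ps ∘ σ) atTop (𝓝 y₀))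
    (hf : LowerSemicontinuousAt (uncurry f) (x₀, y₀)) {P : Y}
    (hfP : ContinuousAt (f · P) x₀)
    (hdesc : ∀ ⦃k l⦄, k < l → f (Ms l) (Ps l) ≤ f (Ms k) P) :
    f x₀ y₀ ≤ f x₀ P := by
  have hbound (s : ℕ) : f x₀ y₀ ≤ f (Ms (σ s)) P :=
    hf.le_of_tendsto_of_eventually_le (hMlim.prodMk_nhds hPlim)
      ((eventually_gt_atTop s).mono fun _ hst => hdesc (hσ hst))
  exact ge_of_tendsto (hfP.tendsto.comp hMlim) (Eventually.of_forall hbound)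

theorem le_of_tendsto_of_eventually_le_uncurry {g : X → Y → β} (hg : Continuous (uncurry g))
    {l : Filter ℕ} [l.NeBot] {xs : ℕ → X} {ys : ℕ → Y} {x₀ : X} {y₀ : Y}
    (hx : Tendsto xs l (𝓝 x₀)) (hy : Tendsto ys l (𝓝 y₀)) {M : X}
    (hle : ∀ᶠ t in l, g (xs t) (ys t) ≤ g M (ys t)) : g x₀ y₀ ≤ g M y₀ :=
  le_of_tendsto_of_tendsto ((hg.tendsto _).comp (hx.prodMk_nhds hy))
    ((hg.tendsto _).comp (tendsto_const_nhds.prodMk_nhds hy)) hle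

end BlockCoordinateDescent

section Frobenius

variable {q p : ℕ}

theorem frobNorm_pos {M : Matrix (Fin q) (Fin p) ℝ} (hM : M ≠ 0) : 0 < frobNorm M := by
  obtain ⟨l, k, hlk⟩ : ∃ l k, M l k ≠ 0 := by
    by_contra! h
    exact hM (Matrix.ext h)
  refine Real.sqrt_pos.2
    (Finset.sum_pos' (fun _ _ => by positivity) ⟨l, Finset.mem_univ l, ?_⟩)
  exact Finset.sum_pos' (fun _ _ => sq_nonneg _) ⟨k, Finset.mem_univ k, by positivity⟩

theorem frobNorm_smul (c : ℝ) (M : Matrix (Fin q) (Fin p) ℝ) :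
    frobNorm (c • M) = |c| * frobNorm M := by
  simp only [frobNorm, Matrix.smul_apply, smul_eq_mul, mul_pow, ← Finset.mul_sum]
  rw [Real.sqrt_mul (sq_nonneg c), Real.sqrt_sq_eq_abs]

theorem sum_sq_eq_frobNorm_sq (M : Matrix (Fin q) (Fin p) ℝ) :
    ∑ l, ∑ k, M l k ^ 2 = frobNorm M ^ 2 :=
  (Real.sq_sqrt (by positivity)).symm

theorem sum_mul_le_frobNorm_mul (M C : Matrix (Fin q) (Fin p) ℝ) :
    ∑ l, ∑ k, M l k * C l k ≤ frobNorm M * frobNorm C := by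
  simpa only [frobNorm, Fintype.sum_prod_type] using
    Real.sum_mul_le_sqrt_mul_sqrt Finset.univ (fun lk : Fin q × Fin p => M lk.1 lk.2)
      (fun lk => C lk.1 lk.2)

end Frobenius

section Objective

variable {n m p q : ℕ} (x : Fin n → Fin p → ℝ) (y : Fin m → Fin q → ℝ)

theorem linObj_eq_neg_sum_mul_Cdisc (M : Matrix (Fin q) (Fin p) ℝ) (P : Fin n → Fin m → ℝ) :
    linObj x y M P = -∑ l, ∑ k, M l k * Cdisc x y P l k := by
  simp only [linObj, Cdisc, Matrix.of_apply, Finset.sum_mul, Finset.mul_sum]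
  simp_rw [Finset.sum_comm (s := (Finset.univ : Finset (Fin m))),
    Finset.sum_comm (s := (Finset.univ : Finset (Fin n)))]
  congr! 5
  ring

theorem linObj_MoptD (r : ℝ) (P : Fin n → Fin m → ℝ) :
    linObj x y (MoptD x y r P) P = -(r * frobNorm (Cdisc x y P)) := by
  rw [linObj_eq_neg_sum_mul_Cdisc, MoptD]
  split_ifs with hC
  · simp [hC, frobNorm]
  · have hpos := frobNorm_pos hC
    simp only [Matrix.smul_apply, smul_eq_mul, mul_assoc, ← Finset.mul_sum, ← sq,
      sum_sq_eq_frobNorm_sq]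
    field_simp

theorem frobNorm_MoptD_le {r : ℝ} (hr : 0 ≤ r) (P : Fin n → Fin m → ℝ) :
    frobNorm (MoptD x y r P) ≤ r := by
  rw [MoptD]
  split_ifs with hC
  · simpa [frobNorm] using hr
  · have hpos := frobNorm_pos hC
    rw [frobNorm_smul, abs_of_nonneg (by positivity), div_mul_cancel₀ _ hpos.ne']

theorem linObj_MoptD_le {r : ℝ} (P : Fin n → Fin m → ℝ)
    {M : Matrix (Fin q) (Fin p) ℝ} (hM : frobNorm M ≤ r) :
    linObj x y (MoptD x y r P) P ≤ linObj x y M P := by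
  rw [linObj_MoptD, linObj_eq_neg_sum_mul_Cdisc, neg_le_neg_iff]
  calc ∑ l, ∑ k, M l k * Cdisc x y P l k ≤ frobNorm M * frobNorm (Cdisc x y P) :=
        sum_mul_le_frobNorm_mul _ _
    _ ≤ r * frobNorm (Cdisc x y P) := by gcongr; exact Real.sqrt_nonneg _

theorem continuous_uncurry_linObj : Continuous (uncurry (linObj x y)) := by
  unfold linObj
  fun_prop

end Objective

section Entropy

variable {n m : ℕ}

def entropyPart (a : Fin n → ℝ) (b : Fin m → ℝ) (φ₁ φ₂ : ℝ → ℝ≥0∞) (ε : ℝ)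
    (P : Fin n → Fin m → ℝ) : ℝ≥0∞ :=
  (∑ i, ENNReal.ofReal (a i) * φ₁ ((∑ j, P i j) / a i))
    + (∑ j, ENNReal.ofReal (b j) * φ₂ ((∑ i, P i j) / b j))
    + ENNReal.ofReal ε * ∑ i, ∑ j, ENNReal.ofReal (a i * b j) * phiKL (P i j / (a i * b j))

theorem LowerSemicontinuous.ofReal_mul {α : Type*} [TopologicalSpace α] {F : α → ℝ≥0∞}
    (hF : LowerSemicontinuous F) (c : ℝ) :
    LowerSemicontinuous fun z => ENNReal.ofReal c * F z :=
  (ENNReal.continuous_const_mul ENNReal.ofReal_ne_top).comp_lowerSemicontinuous hF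
    fun _ _ h => mul_le_mul_right h _

theorem continuous_phiKL : Continuous phiKL :=
  ENNReal.continuous_ofReal.comp
    ((Real.continuous_mul_log.sub continuous_id).add continuous_const)

theorem lowerSemicontinuous_entropyPart (a : Fin n → ℝ) (b : Fin m → ℝ) {φ₁ φ₂ : ℝ → ℝ≥0∞}
    (hφ₁ : LowerSemicontinuous φ₁) (hφ₂ : LowerSemicontinuous φ₂) (ε : ℝ) :
    LowerSemicontinuous (entropyPart a b φ₁ φ₂ ε) := by
  refine LowerSemicontinuous.add (.add ?_ ?_) (.ofReal_mul ?_ ε)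
  · refine lowerSemicontinuous_sum fun i _ => .ofReal_mul (hφ₁.comp ?_) _
    fun_prop
  · refine lowerSemicontinuous_sum fun j _ => .ofReal_mul (hφ₂.comp ?_) _
    fun_prop
  · refine lowerSemicontinuous_sum fun i _ => lowerSemicontinuous_sum fun j _ =>
      .ofReal_mul (continuous_phiKL.comp ?_).lowerSemicontinuous _
    fun_prop

end Entropy

section Jdisc

theorem EReal.continuousAt_add_of_fst_coe (u : ℝ) (e : EReal) :
    ContinuousAt (fun p : EReal × EReal => p.1 + p.2) (u, e) :=
  EReal.continuousAt_add (.inl (EReal.coe_ne_top u)) (.inl (EReal.coe_ne_bot u))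

variable {n m p q : ℕ} (x : Fin n → Fin p → ℝ) (y : Fin m → Fin q → ℝ)
  (a : Fin n → ℝ) (b : Fin m → ℝ) (φ₁ φ₂ : ℝ → ℝ≥0∞) (ε : ℝ)

theorem Jdisc_eq_linObj_add_entropyPart (M : Matrix (Fin q) (Fin p) ℝ)
    (P : Fin n → Fin m → ℝ) :
    Jdisc x y a b φ₁ φ₂ ε M P =
      (linObj x y M P : EReal) + (entropyPart a b φ₁ φ₂ ε P : EReal) := by
  simp only [Jdisc, entropyPart, linObj, EReal.coe_ennreal_add, add_assoc]

theorem lowerSemicontinuous_uncurry_Jdisc (hφ₁ : LowerSemicontinuous φ₁)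
    (hφ₂ : LowerSemicontinuous φ₂) : LowerSemicontinuous (uncurry (Jdisc x y a b φ₁ φ₂ ε)) := by
  have hJ : uncurry (Jdisc x y a b φ₁ φ₂ ε) = fun z =>
      (linObj x y z.1 z.2 : EReal) + (entropyPart a b φ₁ φ₂ ε z.2 : EReal) :=
    funext fun z => Jdisc_eq_linObj_add_entropyPart x y a b φ₁ φ₂ ε z.1 z.2
  rw [hJ]
  refine .add' ?_ ?_ fun _ => EReal.continuousAt_add_of_fst_coe _ _
  · exact (continuous_coe_real_ereal.comp (continuous_uncurry_linObj x y)).lowerSemicontinuous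
  · exact continuous_coe_ennreal_ereal.comp_lowerSemicontinuous
      ((lowerSemicontinuous_entropyPart a b hφ₁ hφ₂ ε).comp continuous_snd)
      EReal.coe_ennreal_strictMono.monotone

theorem continuous_Jdisc_left (P : Fin n → Fin m → ℝ) :
    Continuous fun M => Jdisc x y a b φ₁ φ₂ ε M P := by
  simp only [Jdisc_eq_linObj_add_entropyPart]
  have hlin : Continuous fun M => linObj x y M P := by
    unfold linObj
    fun_prop
  exact continuous_iff_continuousAt.2 fun M => (EReal.continuousAt_add_of_fst_coe _ _).comp
    (f := fun M => ((linObj x y M P : EReal), (entropyPart a b φ₁ φ₂ ε P : EReal)))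
    ((continuous_coe_real_ereal.comp hlin).prodMk continuous_const).continuousAt

theorem Jdisc_MoptD_le {r : ℝ} (P : Fin n → Fin m → ℝ) {M : Matrix (Fin q) (Fin p) ℝ}
    (hM : frobNorm M ≤ r) :
    Jdisc x y a b φ₁ φ₂ ε (MoptD x y r P) P ≤ Jdisc x y a b φ₁ φ₂ ε M P := by
  simp only [Jdisc_eq_linObj_add_entropyPart]
  gcongr
  exact linObj_MoptD_le x y P hM

end Jdisc

theorem stmt16_general {n m p q : ℕ}
    (x : Fin n → Fin p → ℝ) (y : Fin m → Fin q → ℝ)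
    (a : Fin n → ℝ) (b : Fin m → ℝ)
    (ε r : ℝ) (hr : 0 < r)
    (φ₁ φ₂ : ℝ → ℝ≥0∞)
    (hφ₁ : IsEntropyFunction φ₁) (hφ₂ : IsEntropyFunction φ₂)
    (Ms : ℕ → Matrix (Fin q) (Fin p) ℝ) (Ps : ℕ → Fin n → Fin m → ℝ)
    (hM0 : frobNorm (Ms 0) ≤ r)
    (hP : ∀ k : ℕ, (∀ i j, 0 ≤ Ps (k + 1) i j) ∧
      (∀ P : Fin n → Fin m → ℝ, (∀ i j, 0 ≤ P i j) →
        Jdisc x y a b φ₁ φ₂ ε (Ms k) (Ps (k + 1)) ≤ Jdisc x y a b φ₁ φ₂ ε (Ms k) P))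
    (hMstep : ∀ k : ℕ, Ms (k + 1) = MoptD x y r (Ps (k + 1)))
    (Mbar : Matrix (Fin q) (Fin p) ℝ) (Pbar : Fin n → Fin m → ℝ)
    (σ : ℕ → ℕ) (hσ : StrictMono σ)
    (hMlim : ∀ l k, Filter.Tendsto (fun t => Ms (σ t) l k) Filter.atTop (nhds (Mbar l k)))
    (hPlim : ∀ i j, Filter.Tendsto (fun t => Ps (σ t) i j) Filter.atTop (nhds (Pbar i j))) :
    (∀ i j, 0 ≤ Pbar i j) ∧
    (∀ P : Fin n → Fin m → ℝ, (∀ i j, 0 ≤ P i j) →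
      Jdisc x y a b φ₁ φ₂ ε Mbar Pbar ≤ Jdisc x y a b φ₁ φ₂ ε Mbar P) ∧
    (∀ M : Matrix (Fin q) (Fin p) ℝ, frobNorm M ≤ r →
      linObj x y Mbar Pbar ≤ linObj x y M Pbar) := by
  have hball : ∀ k, frobNorm (Ms k) ≤ r
    | 0 => hM0
    | k + 1 => hMstep k ▸ frobNorm_MoptD_le x y hr.le _
  have hdesc := blockDescent_le (Jdisc x y a b φ₁ φ₂ ε) {P | ∀ i j, 0 ≤ P i j} Ms Ps
    (fun k => (hP k).1) (fun k => (hP k).2)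
    fun k => by rw [hMstep k]; exact Jdisc_MoptD_le x y a b φ₁ φ₂ ε _ (hball k)
  have hMσ : Tendsto (Ms ∘ σ) atTop (𝓝 Mbar) :=
    tendsto_pi_nhds.2 fun l => tendsto_pi_nhds.2 (hMlim l)
  have hPσ : Tendsto (Ps ∘ σ) atTop (𝓝 Pbar) :=
    tendsto_pi_nhds.2 fun i => tendsto_pi_nhds.2 (hPlim i)
  have hsucc : ∀ᶠ t in atTop, ∃ k, σ t = k + 1 :=
    (hσ.tendsto_atTop.eventually_gt_atTop 0).mono fun t ht => ⟨σ t - 1, by omega⟩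
  refine ⟨fun i j => ge_of_tendsto (hPlim i j) ?_, fun P hP0 => ?_, fun M hM => ?_⟩
  · exact hsucc.mono fun t ⟨k, hk⟩ => hk ▸ (hP k).1 i j
  · exact le_of_tendsto_of_blockDescent hσ hMσ hPσ
      (lowerSemicontinuous_uncurry_Jdisc x y a b φ₁ φ₂ ε hφ₁.2.1 hφ₂.2.1 _)
      (continuous_Jdisc_left x y a b φ₁ φ₂ ε P).continuousAt fun _ _ hkl => hdesc hkl P hP0
  · refine le_of_tendsto_of_eventually_le_uncurry (continuous_uncurry_linObj x y)
      hMσ hPσ (hsucc.mono fun t ⟨k, hk⟩ => ?_)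
    simp only [comp_apply, hk, hMstep]
    exact linObj_MoptD_le x y _ hM

/-- **Convergence of block coordinate descent for discrete `CR_rUOT_ε`.** Any limit point
`(M̄, P̄)` of the BCD sequence is a blockwise minimum of the objective `J`: `P̄` minimizes
`P ↦ J(P, M̄)` over nonnegative matrices and `M̄` minimizes the linear part over the
Frobenius ball `F_r`; equivalently, a stationary point of the discrete `CR_rUOT_ε`
objective. -/
theorem stmt16 {n m p q : ℕ}
    (x : Fin n → Fin p → ℝ) (y : Fin m → Fin q → ℝ)
    (a : Fin n → ℝ) (b : Fin m → ℝ)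
    (ha : ∀ i, 0 < a i) (hb : ∀ j, 0 < b j)
    (ε r : ℝ) (hε : 0 < ε) (hr : 0 < r)
    (φ₁ φ₂ : ℝ → ℝ≥0∞)
    (hφ₁ : IsEntropyFunction φ₁) (hφ₂ : IsEntropyFunction φ₂)
    (hsl₁ : phiRecession φ₁ = ⊤) (hsl₂ : phiRecession φ₂ = ⊤)
    (Ms : ℕ → Matrix (Fin q) (Fin p) ℝ) (Ps : ℕ → Fin n → Fin m → ℝ)
    (hM0 : frobNorm (Ms 0) ≤ r)
    (hP : ∀ k : ℕ, (∀ i j, 0 ≤ Ps (k + 1) i j) ∧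
      (∀ P : Fin n → Fin m → ℝ, (∀ i j, 0 ≤ P i j) →
        Jdisc x y a b φ₁ φ₂ ε (Ms k) (Ps (k + 1)) ≤ Jdisc x y a b φ₁ φ₂ ε (Ms k) P))
    (hMstep : ∀ k : ℕ, Ms (k + 1) = MoptD x y r (Ps (k + 1)))
    (Mbar : Matrix (Fin q) (Fin p) ℝ) (Pbar : Fin n → Fin m → ℝ)
    (σ : ℕ → ℕ) (hσ : StrictMono σ)
    (hMlim : ∀ l k, Filter.Tendsto (fun t => Ms (σ t) l k) Filter.atTop (nhds (Mbar l k)))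
    (hPlim : ∀ i j, Filter.Tendsto (fun t => Ps (σ t) i j) Filter.atTop (nhds (Pbar i j))) :
    (∀ i j, 0 ≤ Pbar i j) ∧
    (∀ P : Fin n → Fin m → ℝ, (∀ i j, 0 ≤ P i j) →
      Jdisc x y a b φ₁ φ₂ ε Mbar Pbar ≤ Jdisc x y a b φ₁ φ₂ ε Mbar P) ∧
    (∀ M : Matrix (Fin q) (Fin p) ℝ, frobNorm M ≤ r →
      linObj x y Mbar Pbar ≤ linObj x y M Pbar) :=
  stmt16_general x y a b ε r hr φ₁ φ₂ hφ₁ hφ₂ Ms Ps hM0 hP hMstep Mbar Pbar σ hσ hMlim hPlim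
end
end
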